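/- Let P(x,y) = (1/2)Σ_{j=1}^d a_j x_j² − (1/2)y² with a_j > 0 and Σ a_j = 1, and for n ∈ N, n > 1, let U_n be a global solution of the classical obstacle problem in R^{d+1} of the form U_n = (1/2)y² + (1/n)P − 1/n + V_n, where V_n is the Newtonian potential of the contact set E_n = {U_n = 0}, an ellipsoid symmetric with respect to all coordinate hyperplanes. Then E_n ⊂ {|y| ≤ 2/√n}, and there exists R_0 depending only on (a_j) such that E_n ⊂ B_{R_0} and E_n ⊇ B_{1/(8R_0)} ∩ {y = 0}. -/

import Mathlib

open MeasureTheory Metric Filter Topology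

noncomputable section

abbrev Euc (n : ℕ) : Type := EuclideanSpace ℝ (Fin n)

def toE {n : ℕ} (f : Fin n → ℝ) : Euc n := WithLp.toLp 2 f

def SubharmonicOnSet {n : ℕ} (u : Euc n → ℝ) (s : Set (Euc n)) : Prop :=
  ContinuousOn u s ∧
    ∀ x r, 0 < r → closedBall x r ⊆ s → u x ≤ ⨍ y in ball x r, u y ∂volume

def SuperharmonicOnSet {n : ℕ} (u : Euc n → ℝ) (s : Set (Euc n)) : Prop :=
  ContinuousOn u s ∧
    ∀ x r, 0 < r → closedBall x r ⊆ s → (⨍ y in ball x r, u y ∂volume) ≤ u x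

def HarmonicOnSet {n : ℕ} (u : Euc n → ℝ) (s : Set (Euc n)) : Prop :=
  ContinuousOn u s ∧
    ∀ x r, 0 < r → closedBall x r ⊆ s → (⨍ y in ball x r, u y ∂volume) = u x

def reflLast (d : ℕ) (X : Euc (d+1)) : Euc (d+1) :=
  toE (Function.update (fun i => X i) (Fin.last d) (-(X (Fin.last d))))

def IsThinObstacleSolution (d : ℕ) (u : Euc (d+1) → ℝ) : Prop :=
  Continuous u ∧
  (∀ X : Euc (d+1), X (Fin.last d) = 0 → 0 ≤ u X) ∧
  (∀ X, u (reflLast d X) = u X) ∧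
  SuperharmonicOnSet u Set.univ ∧
  HarmonicOnSet u ({X : Euc (d+1) | X (Fin.last d) ≠ 0} ∪ {X | 0 < u X})

def contactSet (d : ℕ) (u : Euc (d+1) → ℝ) : Set (Euc (d+1)) :=
  {X | u X = 0 ∧ X (Fin.last d) = 0}

def IsObstacleSolutionOn (d : ℕ) (U : Euc (d+1) → ℝ) (s : Set (Euc (d+1))) : Prop :=
  ContinuousOn U s ∧ (∀ X ∈ s, 0 ≤ U X) ∧
  SubharmonicOnSet U s ∧
  SuperharmonicOnSet (fun X => U X - ‖X‖^2 / (2*((d:ℝ)+1))) s ∧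
  HarmonicOnSet (fun X => U X - ‖X‖^2 / (2*((d:ℝ)+1))) (s ∩ {X | 0 < U X})

def IsObstacleSolution (d : ℕ) (U : Euc (d+1) → ℝ) : Prop :=
  IsObstacleSolutionOn d U Set.univ

def QuadGrowth (d : ℕ) (u : Euc (d+1) → ℝ) : Prop :=
  ∃ C : ℝ, ∀ X : Euc (d+1), |u X| ≤ C * (‖X‖^2 + 1)

def sphereInt (d : ℕ) (u : Euc (d+1) → ℝ) (r : ℝ) : ℝ :=
  ∫ X in sphere (0 : Euc (d+1)) r, (u X)^2 ∂μH[(d : ℝ)]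

def frequency (d : ℕ) (u : Euc (d+1) → ℝ) (r : ℝ) : ℝ :=
  r * (∫ X in ball (0 : Euc (d+1)) r, ‖gradient u X‖^2 ∂volume) / sphereInt d u r

def newtonPot (d : ℕ) (A : Set (Euc (d+1))) (X : Euc (d+1)) : ℝ :=
  (1 / (((d:ℝ)+1) * ((d:ℝ)-1) * (volume (ball (0 : Euc (d+1)) 1)).toReal)) *
    ∫ Y in A, ‖X - Y‖ ^ ((1:ℝ) - (d:ℝ)) ∂volume

def thinEllipsoid (d : ℕ) (ℓ : Fin d → ℝ) : Set (Euc (d+1)) :=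
  {X : Euc (d+1) | (∑ j : Fin d, (X (Fin.castSucc j))^2 / (ℓ j)^2) ≤ 1 ∧ X (Fin.last d) = 0}

def Wlin (d : ℕ) (U : Euc (d+1) → ℝ) (X : Euc (d+1)) : ℝ :=
  U X - (X (Fin.last d))^2 / 2

def hatW (d : ℕ) (U : Euc (d+1) → ℝ) (X : Euc (d+1)) : ℝ :=
  Wlin d U X / Real.sqrt (sphereInt d (Wlin d U) 1)

def lap (d : ℕ) (φ : Euc (d+1) → ℝ) (X : Euc (d+1)) : ℝ :=
  ∑ i : Fin (d+1),
    fderiv ℝ (fun Y => fderiv ℝ φ Y (EuclideanSpace.single i 1)) X (EuclideanSpace.single i 1)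

def polyEval (d : ℕ) (p : MvPolynomial (Fin (d+1)) ℝ) (X : Euc (d+1)) : ℝ :=
  MvPolynomial.eval (fun i => X i) p


/-!
With `p = 1/n`, on the contact set the formula for `U` and `V ≥ 0` give
`(1 - p) y² / 2 + (p / 2) ∑ a_j x_j² ≤ p`, which bounds `|y|` by `2/√n` and puts the contact set
in a ball `B_{R₀}` depending only on `a`. As `0` lies in the ellipsoid, `V(0) = p`, and comparing
kernels gives `V ≤ 2^(1-d) V(0) ≤ p/2` on `{‖X‖ ≥ 3R₀}`. Finally, if `U(ξ) > 0` for some small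
`ξ ∈ {y = 0}`, let `Q = y²/2 + p P(X - ξ)`. Since `‖X‖²/(2(d+1)) - Q` is a harmonic quadratic,
`U - Q` has the mean value property on `B_{3R₀} ∩ {U > 0}`, so it reaches a value `≥ U(ξ) > 0`
on the boundary of that set; but `U - Q ≤ 0` where `U = 0`, and `U - Q < 0` on `‖X‖ = 3R₀`.
-/

open Set
open scoped ENNReal

theorem Continuous.integrableOn_ball {E F : Type*} [MetricSpace E] [ProperSpace E]
    [MeasurableSpace E] [OpensMeasurableSpace E] [NormedAddCommGroup F] {μ : Measure E}
    [IsFiniteMeasureOnCompacts μ] {f : E → F} (hf : Continuous f) (x : E) (r : ℝ) :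
    IntegrableOn f (ball x r) μ :=
  (hf.continuousOn.integrableOn_compact (isCompact_closedBall x r)).mono_set ball_subset_closedBall

theorem average_add {α E : Type*} [MeasurableSpace α] [NormedAddCommGroup E] [NormedSpace ℝ E]
    {μ : Measure α} {f g : α → E} (hf : Integrable f μ) (hg : Integrable g μ) :
    ⨍ x, (f x + g x) ∂μ = (⨍ x, f x ∂μ) + ⨍ x, g x ∂μ := by
  rw [average_eq, average_eq, average_eq, integral_add hf hg, smul_add]

theorem setIntegral_ball_zero_comp_linearIsometryEquiv {E : Type*} [NormedAddCommGroup E]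
    [InnerProductSpace ℝ E] [FiniteDimensional ℝ E] [MeasurableSpace E] [BorelSpace E]
    (e : E ≃ₗᵢ[ℝ] E) (f : E → ℝ) (r : ℝ) :
    ∫ z in ball 0 r, f (e z) = ∫ z in ball 0 r, f z := by
  have hpre : e ⁻¹' ball 0 r = ball 0 r := by ext z; simp
  simpa only [hpre] using
    e.measurePreserving.setIntegral_preimage_emb e.toHomeomorph.measurableEmbedding f (ball 0 r)

section QuadraticMeanValue

variable {ι : Type*} [Fintype ι]

theorem integral_ball_zero_apply (i : ι) (r : ℝ) :
    ∫ z in ball (0 : EuclideanSpace ℝ ι) r, z i = 0 := by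
  have h := setIntegral_ball_zero_comp_linearIsometryEquiv (LinearIsometryEquiv.neg ℝ)
    (fun z : EuclideanSpace ℝ ι => z i) r
  simp only [LinearIsometryEquiv.coe_neg, PiLp.neg_apply, integral_neg] at h
  linarith

theorem integral_ball_zero_apply_sq_eq [DecidableEq ι] (i j : ι) (r : ℝ) :
    ∫ z in ball (0 : EuclideanSpace ℝ ι) r, z i ^ 2
      = ∫ z in ball (0 : EuclideanSpace ℝ ι) r, z j ^ 2 := by
  rw [← setIntegral_ball_zero_comp_linearIsometryEquiv
    (LinearIsometryEquiv.piLpCongrLeft 2 ℝ ℝ (Equiv.swap i j))]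
  simp [LinearIsometryEquiv.piLpCongrLeft_apply, Equiv.piCongrLeft'_apply]

theorem integral_ball_zero_sum_mul_add_mul_sq {α : ι → ℝ} (hα : ∑ i, α i = 0) (c : ι → ℝ)
    (r : ℝ) : ∫ z in ball (0 : EuclideanSpace ℝ ι) r, ∑ i, (c i * z i + α i * z i ^ 2) = 0 := by
  classical
  have hlin : ∀ i, Continuous fun z : EuclideanSpace ℝ ι => c i * z i := fun i => by fun_prop
  have hsq : ∀ i, Continuous fun z : EuclideanSpace ℝ ι => α i * z i ^ 2 := fun i => by fun_prop
  have hterm : ∀ i, ∫ z in ball (0 : EuclideanSpace ℝ ι) r, (c i * z i + α i * z i ^ 2)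
      = α i * ∫ z in ball (0 : EuclideanSpace ℝ ι) r, z i ^ 2 := fun i => by
    rw [integral_add ((hlin i).integrableOn_ball 0 r) ((hsq i).integrableOn_ball 0 r),
      integral_const_mul, integral_const_mul, integral_ball_zero_apply, mul_zero, zero_add]
  rw [integral_finsetSum (f := fun i (z : EuclideanSpace ℝ ι) => c i * z i + α i * z i ^ 2) _
    fun i _ => Continuous.integrableOn_ball (by fun_prop) 0 r]
  simp_rw [hterm]
  rcases isEmpty_or_nonempty ι with hι | ⟨⟨i₀⟩⟩
  · simp
  · simp_rw [integral_ball_zero_apply_sq_eq _ i₀, ← Finset.sum_mul, hα, zero_mul]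

theorem setAverage_ball_sum_quadratic {α : ι → ℝ} (hα : ∑ i, α i = 0) (β γ : ι → ℝ)
    (x : EuclideanSpace ℝ ι) {r : ℝ} (hr : 0 < r) :
    ⨍ y in ball x r, ∑ i, (α i * y i ^ 2 + β i * y i + γ i)
      = ∑ i, (α i * x i ^ 2 + β i * x i + γ i) := by
  set q : EuclideanSpace ℝ ι → ℝ := fun y => ∑ i, (α i * y i ^ 2 + β i * y i + γ i)
  have hshift : ∀ z, q (x + z) = q x + ∑ i, ((2 * α i * x i + β i) * z i + α i * z i ^ 2) := by
    intro z
    simp only [q, PiLp.add_apply, ← Finset.sum_add_distrib]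
    exact Finset.sum_congr rfl fun i _ => by ring
  have htrans : ∫ y in ball x r, q y = ∫ z in ball 0 r, q (x + z) := by
    have hpre : (x + ·) ⁻¹' ball x r = ball (0 : EuclideanSpace ℝ ι) r := by
      ext z; simp [dist_eq_norm]
    rw [← hpre, (measurePreserving_add_left volume x).setIntegral_preimage_emb
      (measurableEmbedding_addLeft x)]
  have hvol : volume.real (ball (0 : EuclideanSpace ℝ ι) r) ≠ 0 :=
    ENNReal.toReal_ne_zero.2 ⟨(measure_ball_pos volume 0 hr).ne', measure_ball_lt_top.ne⟩
  rw [setAverage_eq, htrans, funext hshift, integral_add (f := fun _ => q x)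
      (integrableOn_const measure_ball_lt_top.ne) (Continuous.integrableOn_ball (by fun_prop) 0 r),
    integral_ball_zero_sum_mul_add_mul_sq hα, setIntegral_const, add_zero, smul_smul,
    Measure.addHaar_real_ball_center, inv_mul_cancel₀ hvol, one_smul]

theorem setAverage_ball_mul_normSq_sub_sum_sq {c : ℝ} {κ : ι → ℝ}
    (hκ : ∑ i, κ i = Fintype.card ι * c) (ξ x : EuclideanSpace ℝ ι) {r : ℝ} (hr : 0 < r) :
    ⨍ y in ball x r, (c * ‖y‖ ^ 2 - ∑ i, κ i * (y i - ξ i) ^ 2)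
      = c * ‖x‖ ^ 2 - ∑ i, κ i * (x i - ξ i) ^ 2 := by
  have hexpand : ∀ y : EuclideanSpace ℝ ι, c * ‖y‖ ^ 2 - ∑ i, κ i * (y i - ξ i) ^ 2
      = ∑ i, ((c - κ i) * y i ^ 2 + 2 * κ i * ξ i * y i + -(κ i * ξ i ^ 2)) := by
    intro y
    rw [EuclideanSpace.real_norm_sq_eq, Finset.mul_sum, ← Finset.sum_sub_distrib]
    exact Finset.sum_congr rfl fun i _ => by ring
  have htrace : ∑ i, (c - κ i) = 0 := by
    rw [Finset.sum_sub_distrib, hκ, Finset.sum_const, Finset.card_univ, nsmul_eq_mul, sub_self]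
  simp_rw [hexpand]
  exact setAverage_ball_sum_quadratic htrace _ _ x hr

end QuadraticMeanValue

theorem eqOn_ball_of_setAverage_eq_of_le {E : Type*} [MetricSpace E] [ProperSpace E]
    [MeasurableSpace E] [OpensMeasurableSpace E] {μ : Measure E} [μ.IsOpenPosMeasure]
    [IsFiniteMeasureOnCompacts μ] {w : E → ℝ} (hw : Continuous w)
    {x : E} {ρ M : ℝ} (hρ : 0 < ρ) (hle : ∀ y ∈ ball x ρ, w y ≤ M)
    (havg : ⨍ y in ball x ρ, w y ∂μ = M) : EqOn w (fun _ => M) (ball x ρ) := by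
  have hμ : μ (ball x ρ) ≠ ∞ := measure_ball_lt_top.ne
  have hae : w =ᵐ[μ.restrict (ball x ρ)] fun _ => M := by
    refine (integral_eq_iff_of_ae_le (hw.integrableOn_ball x ρ) (integrableOn_const hμ)
      ((ae_restrict_mem measurableSet_ball).mono hle)).1 ?_
    rw [setIntegral_const, ← havg, setAverage_eq, smul_smul, measureReal_def,
      mul_inv_cancel₀ (ENNReal.toReal_ne_zero.2 ⟨(measure_ball_pos μ x hρ).ne', hμ⟩), one_smul]
  exact Measure.eqOn_open_of_ae_eq hae isOpen_ball hw.continuousOn continuousOn_const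

theorem exists_mem_frontier_le_of_setAverage_ball_eq {E : Type*} [NormedAddCommGroup E]
    [InnerProductSpace ℝ E] [ProperSpace E] [Nontrivial E] [MeasurableSpace E] [BorelSpace E]
    {μ : Measure E} [μ.IsOpenPosMeasure] [IsFiniteMeasureOnCompacts μ]
    {w : E → ℝ} (hw : Continuous w) {O : Set E} (hO : IsOpen O) (hOb : Bornology.IsBounded O)
    (hmean : ∀ x ρ, 0 < ρ → closedBall x ρ ⊆ O → ⨍ y in ball x ρ, w y ∂μ = w x)
    {ξ : E} (hξ : ξ ∈ O) : ∃ z ∈ frontier O, w ξ ≤ w z := by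
  have hK : IsCompact (closure O) := hOb.isCompact_closure
  obtain ⟨z₀, hz₀, hmax⟩ := hK.exists_isMaxOn ⟨ξ, subset_closure hξ⟩ hw.continuousOn
  obtain ⟨v, hv⟩ := exists_ne (0 : E)
  -- among the maximum points take one extremal in the direction `v`: the mean value property
  -- forces `w` to be maximal on a whole ball around it, so it cannot lie in `O`
  obtain ⟨z, ⟨hzK, hzM⟩, hzv⟩ :=
    (hK.inter_right (isClosed_eq hw continuous_const)).exists_isMaxOn (f := fun x => inner ℝ v x)
      ⟨z₀, hz₀, rfl⟩ (continuous_const.inner continuous_id).continuousOn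
  refine ⟨z, hO.frontier_eq ▸ ⟨hzK, fun hzO => ?_⟩, hzM.symm ▸ hmax (subset_closure hξ)⟩
  obtain ⟨ε, hε, hball⟩ := Metric.isOpen_iff.1 hO z hzO
  have hsub : closedBall z (ε / 2) ⊆ O := (closedBall_subset_ball (by linarith)).trans hball
  have hflat : EqOn w (fun _ => w z₀) (ball z (ε / 2)) :=
    eqOn_ball_of_setAverage_eq_of_le (μ := μ) hw (by positivity)
      (fun y hy => hmax (subset_closure (hsub (ball_subset_closedBall hy))))
      (by rw [hmean z _ (by positivity) hsub, hzM])
  set t := ε / 4 / ‖v‖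
  have hvpos : 0 < ‖v‖ := norm_pos_iff.2 hv
  have hy : z + t • v ∈ ball z (ε / 2) := by
    rw [mem_ball, dist_eq_norm, add_sub_cancel_left, norm_smul,
      Real.norm_of_nonneg (by positivity), div_mul_cancel₀ _ hvpos.ne']
    linarith
  have hle : inner ℝ v (z + t • v) ≤ inner ℝ v z :=
    hzv ⟨subset_closure (hsub (ball_subset_closedBall hy)), hflat hy⟩
  rw [inner_add_right, inner_smul_right, real_inner_self_eq_norm_sq] at hle
  have : 0 < t * ‖v‖ ^ 2 := by positivity
  linarith

theorem locallyIntegrable_norm_rpow {E : Type*} [NormedAddCommGroup E] [NormedSpace ℝ E]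
    [FiniteDimensional ℝ E] [MeasurableSpace E] [BorelSpace E] {μ : Measure E}
    [μ.IsAddHaarMeasure] (hE : 1 ≤ Module.finrank ℝ E) {s : ℝ}
    (hs : -(Module.finrank ℝ E : ℝ) < s) : LocallyIntegrable (fun x : E => ‖x‖ ^ s) μ := by
  refine locallyIntegrable_of_norm_le_rpow (C := 1) (α := -s) hE (by linarith) ?_
    (continuous_norm.measurable.pow_const s).aestronglyMeasurable
  refine Eventually.of_forall fun x => ?_
  rw [neg_neg, one_mul, Real.norm_of_nonneg (Real.rpow_nonneg (norm_nonneg x) s)]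

section NewtonPotential

variable {d : ℕ} {A : Set (Euc (d+1))}

theorem newtonPot_nonneg (hd : 1 ≤ d) (X : Euc (d+1)) : 0 ≤ newtonPot d A X := by
  have hd' : (1:ℝ) ≤ d := by exact_mod_cast hd
  exact mul_nonneg (one_div_nonneg.2 (mul_nonneg (by positivity) ENNReal.toReal_nonneg))
    (integral_nonneg fun Y => Real.rpow_nonneg (norm_nonneg _) _)

theorem newtonPot_le_two_rpow_mul_newtonPot_zero (hd : 1 ≤ d) (hA : MeasurableSet A) {R : ℝ}
    (hAR : A ⊆ ball 0 R) {X : Euc (d+1)} (hX : 3 * R ≤ ‖X‖) :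
    newtonPot d A X ≤ 2 ^ ((1:ℝ) - d) * newtonPot d A 0 := by
  have hd' : (1:ℝ) ≤ d := by exact_mod_cast hd
  have hint : IntegrableOn (fun Y : Euc (d+1) => ‖(0 : Euc (d+1)) - Y‖ ^ ((1:ℝ) - d)) A := by
    simp only [zero_sub, norm_neg]
    refine (locallyIntegrable_norm_rpow (by simp) (by simp)).integrableOn_isCompact
      (isCompact_closedBall 0 R) |>.mono_set (hAR.trans ball_subset_closedBall)
  -- `2‖Y‖ < ‖X - Y‖` for `Y ∈ A`, and the kernel is decreasing
  have hkernel : ∀ᵐ Y ∂volume.restrict A,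
      ‖X - Y‖ ^ ((1:ℝ) - d) ≤ 2 ^ ((1:ℝ) - d) * ‖(0 : Euc (d+1)) - Y‖ ^ ((1:ℝ) - d) := by
    rw [ae_restrict_iff' hA]
    filter_upwards [Measure.ae_ne volume 0] with Y hY0 hYA
    have hY : ‖Y‖ < R := mem_ball_zero_iff.1 (hAR hYA)
    rw [zero_sub, norm_neg, ← Real.mul_rpow zero_le_two (norm_nonneg Y)]
    refine Real.rpow_le_rpow_of_nonpos (by positivity) ?_ (by linarith)
    linarith [norm_sub_norm_le X Y]
  unfold newtonPot
  rw [mul_left_comm, ← integral_const_mul (2 ^ ((1:ℝ) - d))]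
  refine mul_le_mul_of_nonneg_left (integral_mono_of_nonneg
    (Eventually.of_forall fun Y => Real.rpow_nonneg (norm_nonneg _) _) (hint.const_mul _)
    hkernel) ?_
  exact one_div_nonneg.2 (mul_nonneg (mul_nonneg (by positivity) (by linarith))
    ENNReal.toReal_nonneg)

theorem newtonPot_le_half_newtonPot_zero (hd : 2 ≤ d) (hA : MeasurableSet A) {R : ℝ}
    (hAR : A ⊆ ball 0 R) {X : Euc (d+1)} (hX : 3 * R ≤ ‖X‖) :
    newtonPot d A X ≤ newtonPot d A 0 / 2 := by
  have hd' : (2:ℝ) ≤ d := by exact_mod_cast hd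
  have h2 : (2:ℝ) ^ ((1:ℝ) - d) ≤ 2 ^ (-1:ℝ) :=
    Real.rpow_le_rpow_of_exponent_le one_le_two (by linarith)
  rw [Real.rpow_neg_one] at h2
  have := newtonPot_le_two_rpow_mul_newtonPot_zero (by omega) hA hAR hX
  nlinarith [newtonPot_nonneg (A := A) (by omega) 0]

end NewtonPotential

def quadraticP {d : ℕ} (a : Fin d → ℝ) (X : Euc (d+1)) : ℝ :=
  (1/2) * (∑ j, a j * (X (Fin.castSucc j))^2) - (1/2) * (X (Fin.last d))^2

/-- For `ξ` with `ξ_y = 0`, `∑ i, comparisonWeight a p i * (X i - ξ i)^2` is the translated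
polynomial solution `(1/2) y² + p P(X - ξ)`. -/
def comparisonWeight {d : ℕ} (a : Fin d → ℝ) (p : ℝ) : Fin (d+1) → ℝ :=
  Fin.lastCases ((1 - p) / 2) fun j => p * a j / 2

section Comparison

variable {d : ℕ} {a : Fin d → ℝ} {p : ℝ}

theorem sum_comparisonWeight (hsum : ∑ j, a j = 1) : ∑ i, comparisonWeight a p i = 1 / 2 := by
  simp only [comparisonWeight, Fin.sum_univ_castSucc, Fin.lastCases_castSucc, Fin.lastCases_last,
    ← Finset.sum_div, ← Finset.mul_sum, hsum]
  ring

theorem comparisonWeight_nonneg (ha : ∀ j, 0 ≤ a j) (hp0 : 0 ≤ p) (hp1 : p ≤ 1) (i : Fin (d+1)) :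
    0 ≤ comparisonWeight a p i := by
  induction i using Fin.lastCases with
  | last => simp only [comparisonWeight, Fin.lastCases_last]; linarith
  | cast j => simp only [comparisonWeight, Fin.lastCases_castSucc]; have := ha j; positivity

theorem sub_sum_comparisonWeight_le (ha : ∀ j, 0 ≤ a j) (hsum : ∑ j, a j = 1) (hp0 : 0 ≤ p)
    {ξ : Euc (d+1)} (hξ : ξ (Fin.last d) = 0) (X : Euc (d+1)) :
    (X (Fin.last d))^2 / 2 + p * quadraticP a X - ∑ i, comparisonWeight a p i * (X i - ξ i)^2
      ≤ p * (‖X‖ * ‖ξ‖) := by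
  have hexpand : (X (Fin.last d))^2 / 2 + p * quadraticP a X
      - ∑ i, comparisonWeight a p i * (X i - ξ i)^2
      = p * ∑ j, a j * (X (Fin.castSucc j) * ξ (Fin.castSucc j) - ξ (Fin.castSucc j)^2 / 2) := by
    have hsums : p / 2 * ∑ j, a j * X (Fin.castSucc j) ^ 2
        - ∑ j, p * a j / 2 * (X (Fin.castSucc j) - ξ (Fin.castSucc j)) ^ 2
        = p * ∑ j, a j * (X (Fin.castSucc j) * ξ (Fin.castSucc j) - ξ (Fin.castSucc j)^2 / 2) := by
      rw [Finset.mul_sum, Finset.mul_sum, ← Finset.sum_sub_distrib]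
      exact Finset.sum_congr rfl fun j _ => by ring
    simp only [quadraticP, comparisonWeight, Fin.sum_univ_castSucc, Fin.lastCases_castSucc,
      Fin.lastCases_last, hξ]
    linear_combination hsums
  have hcoord : ∀ j, X (Fin.castSucc j) * ξ (Fin.castSucc j) ≤ ‖X‖ * ‖ξ‖ := fun j =>
    calc X (Fin.castSucc j) * ξ (Fin.castSucc j)
        ≤ ‖X (Fin.castSucc j)‖ * ‖ξ (Fin.castSucc j)‖ :=
          (Real.le_norm_self _).trans (norm_mul _ _).le
      _ ≤ ‖X‖ * ‖ξ‖ := mul_le_mul (PiLp.norm_apply_le X _) (PiLp.norm_apply_le ξ _)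
          (norm_nonneg _) (norm_nonneg _)
  rw [hexpand]
  gcongr
  calc ∑ j, a j * (X (Fin.castSucc j) * ξ (Fin.castSucc j) - ξ (Fin.castSucc j)^2 / 2)
      ≤ ∑ j, a j * (‖X‖ * ‖ξ‖) := Finset.sum_le_sum fun j _ =>
        mul_le_mul_of_nonneg_left (by linarith [hcoord j, sq_nonneg (ξ (Fin.castSucc j))]) (ha j)
    _ = ‖X‖ * ‖ξ‖ := by rw [← Finset.sum_mul, hsum, one_mul]

end Comparison

theorem IsObstacleSolution.continuous {d : ℕ} {U : Euc (d+1) → ℝ} (hU : IsObstacleSolution d U) :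
    Continuous U :=
  continuousOn_univ.1 hU.1

theorem IsObstacleSolution.nonneg {d : ℕ} {U : Euc (d+1) → ℝ} (hU : IsObstacleSolution d U)
    (X : Euc (d+1)) : 0 ≤ U X :=
  hU.2.1 X (Set.mem_univ X)

theorem IsObstacleSolution.eq_zero_of_le_on_sphere {d : ℕ} {a : Fin d → ℝ} (ha : ∀ j, 0 ≤ a j)
    (hsum : ∑ j, a j = 1) {U : Euc (d+1) → ℝ} (hU : IsObstacleSolution d U) {p ε ρ : ℝ}
    (hp0 : 0 ≤ p) (hp1 : p ≤ 1)
    (hbd : ∀ X : Euc (d+1), ‖X‖ = ρ → U X ≤ (X (Fin.last d))^2 / 2 + p * quadraticP a X - ε)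
    {ξ : Euc (d+1)} (hξ : ξ (Fin.last d) = 0) (hξρ : ‖ξ‖ < ρ) (hξε : p * (ρ * ‖ξ‖) < ε) :
    U ξ = 0 := by
  by_contra hUξ
  have hUξ : 0 < U ξ := (hU.nonneg ξ).lt_of_ne' hUξ
  set Q : Euc (d+1) → ℝ := fun X => ∑ i, comparisonWeight a p i * (X i - ξ i)^2
  have hQ : ∀ X, 0 ≤ Q X := fun X => Finset.sum_nonneg fun i _ =>
    mul_nonneg (comparisonWeight_nonneg ha hp0 hp1 i) (sq_nonneg _)
  have hUc := hU.continuous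
  set O := ball (0 : Euc (d+1)) ρ ∩ {X | 0 < U X}
  have hO : IsOpen O := isOpen_ball.inter (isOpen_lt continuous_const hUc)
  have hmean : ∀ x r, 0 < r → closedBall x r ⊆ O → ⨍ y in ball x r, (U y - Q y) = U x - Q x := by
    intro x r hr hxr
    set c : ℝ := 1 / (2 * ((d:ℝ) + 1))
    have hsplit : ∀ y, U y - Q y = (U y - ‖y‖^2 / (2 * ((d:ℝ) + 1))) + (c * ‖y‖^2 - Q y) :=
      fun y => by ring
    have hκ : ∑ i, comparisonWeight a p i = Fintype.card (Fin (d+1)) * c := by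
      rw [sum_comparisonWeight hsum, Fintype.card_fin]; simp only [c]; push_cast; field_simp
    simp_rw [hsplit]
    rw [average_add (Continuous.integrableOn_ball (by fun_prop) x r)
      (Continuous.integrableOn_ball (by fun_prop) x r),
      hU.2.2.2.2.2 x r hr fun y hy => ⟨Set.mem_univ y, (hxr hy).2⟩,
      setAverage_ball_mul_normSq_sub_sum_sq hκ ξ x hr]
  have hQξ : Q ξ = 0 := by simp [Q]
  obtain ⟨z, hzO, hle⟩ := exists_mem_frontier_le_of_setAverage_ball_eq (μ := volume)
    (w := fun X => U X - Q X) (by fun_prop) hO (isBounded_ball.subset inter_subset_left) hmean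
    (ξ := ξ) ⟨mem_ball_zero_iff.2 hξρ, hUξ⟩
  simp only [hQξ, sub_zero] at hle
  have hz : ‖z‖ ≤ ρ := by
    have := (frontier_subset_closure.trans ((closure_mono inter_subset_left).trans
      closure_ball_subset_closedBall)) hzO
    rwa [mem_closedBall_zero_iff] at this
  rcases hz.lt_or_eq with hz | hz
  · have hUz : U z ≤ 0 := by
      by_contra! h
      exact (hO.frontier_eq ▸ hzO).2 ⟨mem_ball_zero_iff.2 hz, h⟩
    linarith [hQ z]
  · have := sub_sum_comparisonWeight_le ha hsum hp0 hξ z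
    rw [hz] at this
    linarith [hbd z hz]

section ContactSet

variable {d : ℕ} {a : Fin d → ℝ}

theorem sq_last_le_and_sum_le_of_eq_zero (ha : ∀ j, 0 ≤ a j) {p V : ℝ} (hp : 0 < p)
    (hp2 : p ≤ 1 / 2) (hV : 0 ≤ V) {X : Euc (d+1)}
    (h : (X (Fin.last d))^2 / 2 + p * quadraticP a X - p + V = 0) :
    (X (Fin.last d))^2 ≤ 4 * p ∧ ∑ j, a j * (X (Fin.castSucc j))^2 ≤ 2 := by
  have hS : 0 ≤ ∑ j, a j * (X (Fin.castSucc j))^2 :=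
    Finset.sum_nonneg fun j _ => mul_nonneg (ha j) (sq_nonneg _)
  unfold quadraticP at h
  constructor
  · nlinarith [mul_nonneg hp.le hS,
      mul_nonneg (sq_nonneg (X (Fin.last d))) (by linarith : 0 ≤ 1 / 2 - p)]
  · nlinarith [mul_nonneg (sq_nonneg (X (Fin.last d))) (by linarith : 0 ≤ 1 - p)]

def contactRadius (a : Fin d → ℝ) : ℝ :=
  √(∑ j, 2 / a j + 2) + 1

theorem one_le_contactRadius : 1 ≤ contactRadius a :=
  le_add_of_nonneg_left (Real.sqrt_nonneg _)

theorem norm_lt_contactRadius (ha : ∀ j, 0 < a j) {X : Euc (d+1)}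
    (hS : ∑ j, a j * (X (Fin.castSucc j))^2 ≤ 2) (hy : (X (Fin.last d))^2 ≤ 2) :
    ‖X‖ < contactRadius a := by
  have hcoord : ∀ j, (X (Fin.castSucc j))^2 ≤ 2 / a j := fun j => by
    rw [le_div_iff₀' (ha j)]
    exact (Finset.single_le_sum (f := fun j => a j * (X (Fin.castSucc j))^2)
      (fun j _ => mul_nonneg (ha j).le (sq_nonneg _)) (Finset.mem_univ j)).trans hS
  have hnorm : ‖X‖ ^ 2 ≤ ∑ j, 2 / a j + 2 := by
    rw [EuclideanSpace.real_norm_sq_eq, Fin.sum_univ_castSucc]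
    exact add_le_add (Finset.sum_le_sum fun j _ => hcoord j) hy
  exact (Real.le_sqrt_of_sq_le hnorm).trans_lt (lt_add_one _)

end ContactSet

theorem thickened_ellipsoid_bounds (d : ℕ) (hd : 2 ≤ d)
    (a : Fin d → ℝ) (ha : ∀ j, 0 < a j) (hsum : ∑ j, a j = 1) :
    ∃ R₀ : ℝ, 0 < R₀ ∧
      ∀ (n : ℕ), 1 < n →
      ∀ (U : Euc (d+1) → ℝ) (Eset : Set (Euc (d+1))),
        IsObstacleSolution d U →
        Eset = {X | U X = 0} →
        (∃ ℓ : Fin (d+1) → ℝ, (∀ i, 0 < ℓ i) ∧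
          Eset = {X : Euc (d+1) | (∑ i : Fin (d+1), (X i)^2 / (ℓ i)^2) ≤ 1}) →
        (∀ X : Euc (d+1),
          U X = (X (Fin.last d))^2 / 2
            + (1 / (n:ℝ)) * ((1/2) * (∑ j : Fin d, a j * (X (Fin.castSucc j))^2)
                - (1/2) * (X (Fin.last d))^2)
            - 1 / (n:ℝ) + newtonPot d Eset X) →
        (Eset ⊆ {X : Euc (d+1) | |X (Fin.last d)| ≤ 2 / Real.sqrt n} ∧
          Eset ⊆ ball (0 : Euc (d+1)) R₀ ∧
          (ball (0 : Euc (d+1)) (1/(8*R₀)) ∩ {X : Euc (d+1) | X (Fin.last d) = 0}) ⊆ Eset) := by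
  have hd1 : 1 ≤ d := by omega
  refine ⟨contactRadius a, zero_lt_one.trans_le one_le_contactRadius,
    fun n hn U E hU hE ⟨ℓ, _, hℓ⟩ hform => ?_⟩
  have hmem : ∀ X, X ∈ E ↔ U X = 0 := fun X => by rw [hE]; rfl
  set p : ℝ := 1 / n
  have hp : 0 < p := by positivity
  have hp2 : p ≤ 1 / 2 := by simp only [p]; gcongr; exact_mod_cast hn
  have hcontact : ∀ X ∈ E, (X (Fin.last d))^2 ≤ 4 * p ∧ ∑ j, a j * (X (Fin.castSucc j))^2 ≤ 2 :=
    fun X hX => sq_last_le_and_sum_le_of_eq_zero (fun j => (ha j).le) hp hp2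
      (newtonPot_nonneg hd1 X) ((hform X).symm.trans ((hmem X).1 hX))
  have hEball : E ⊆ ball 0 (contactRadius a) := fun X hX => mem_ball_zero_iff.2 <|
    norm_lt_contactRadius ha (hcontact X hX).2 (by linarith [(hcontact X hX).1])
  have hV0 : newtonPot d E 0 = p := by
    have := hform 0
    simp [(hmem 0).1 (hℓ ▸ by simp)] at this
    linarith
  refine ⟨fun X hX => ?_, hEball, fun ξ ⟨hξ, hξy⟩ => (hmem ξ).2 ?_⟩
  · refine abs_le_of_sq_le_sq ((hcontact X hX).1.trans_eq ?_) (by positivity)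
    rw [div_pow, Real.sq_sqrt (by positivity)]
    ring
  · have hR := one_le_contactRadius (a := a)
    have hξR : 8 * contactRadius a * ‖ξ‖ < 1 := by
      rw [mem_ball_zero_iff, lt_div_iff₀ (by positivity)] at hξ
      linarith
    refine hU.eq_zero_of_le_on_sphere (ρ := 3 * contactRadius a) (ε := p / 2)
      (fun j => (ha j).le) hsum hp.le (by linarith) (fun X hX => ?_) hξy
      (by nlinarith [norm_nonneg ξ]) (by nlinarith [norm_nonneg ξ])
    have hV := newtonPot_le_half_newtonPot_zero hd
      (hE ▸ (isClosed_eq hU.continuous continuous_const).measurableSet) hEball hX.ge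
    rw [hform X]
    unfold quadraticP
    linarith
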